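/- arXiv:2109.01421 — 3 statements merged into one kernel-verified Lean document; each statement's English description precedes it below -/
import Mathlib

section
/- Let R be a ring and let f : X → Y be a chain map between ℤ-indexed chain complexes of R-modules, each equipped with a decreasing filtration by subcomplexes (F_n)_{n ∈ ℕ} with F_0 = the whole complex and such that in each degree i the natural map from X_i (resp. Y_i) to the inverse limit over n of X_i/F_nX_i (resp. Y_i/F_nY_i) is an isomorphism (completeness). Assume f is filtration-preserving, i.e. f(F_nX_i) ⊆ F_nY_i for all n and i. If for every n ∈ ℕ the induced chain map on associated graded complexes F_nX/F_{n+1}X → F_nY/F_{n+1}Y is a quasi-isomorphism, then f itself is a quasi-isomorphism. -/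
universe u

theorem aux_acyclic {R : Type u} [Ring R] (C : ℤ → Type u)
    [∀ i, AddCommGroup (C i)] [∀ i, Module R (C i)]
    (D : ∀ i : ℤ, C (i + 1) →ₗ[R] C i)
    (hD2 : ∀ (i : ℤ) (c : C (i + 1 + 1)), D i (D (i + 1) c) = 0)
    (G : ℕ → ∀ i : ℤ, Submodule R (C i))
    (hG0 : ∀ i, G 0 i = ⊤)
    (hGd : ∀ (n : ℕ) (i : ℤ) (c : C (i + 1)), c ∈ G n (i + 1) → D i c ∈ G n i)
    (hsep : ∀ (i : ℤ) (c : C i), (∀ n, c ∈ G n i) → c = 0)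
    (hcomp : ∀ (i : ℤ) (a : ℕ → C i), (∀ n, a (n + 1) - a n ∈ G n i) →
      ∃ c : C i, ∀ n, c - a n ∈ G n i)
    (hgr : ∀ (n : ℕ) (i : ℤ) (c : C (i + 1)), c ∈ G n (i + 1) → D i c = 0 →
      ∃ c' ∈ G (n + 1) (i + 1), ∃ w ∈ G n (i + 1 + 1), c = c' + D (i + 1) w) :
    ∀ (i : ℤ) (c : C (i + 1)), D i c = 0 → ∃ w : C (i + 1 + 1), c = D (i + 1) w := by
  intro i c hc
  have step : ∀ (n : ℕ) (b : C (i + 1 + 1)), c - D (i + 1) b ∈ G n (i + 1) →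
      ∃ w ∈ G n (i + 1 + 1), c - D (i + 1) (b + w) ∈ G (n + 1) (i + 1) := by
    intro n b hb
    have h0 : D i (c - D (i + 1) b) = 0 := by rw [map_sub, hc, hD2, sub_zero]
    obtain ⟨c', hc', w, hw, heq⟩ := hgr n i _ hb h0
    refine ⟨w, hw, ?_⟩
    have e : c - D (i + 1) (b + w) = c' := by
      rw [map_add, ← sub_sub, heq]
      abel
    rw [e]; exact hc'
  let F : ∀ n : ℕ, {b : C (i + 1 + 1) // c - D (i + 1) b ∈ G n (i + 1)} := fun n =>
    Nat.rec ⟨0, by rw [map_zero, sub_zero, hG0]; exact Submodule.mem_top⟩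
      (fun n p => ⟨p.1 + Classical.choose (step n p.1 p.2),
        (Classical.choose_spec (step n p.1 p.2)).2⟩) n
  have hF2 : ∀ n, (F (n + 1)).1 - (F n).1 ∈ G n (i + 1 + 1) := by
    intro n
    have h : (F (n + 1)).1 = (F n).1 + Classical.choose (step n (F n).1 (F n).2) := rfl
    rw [h, add_sub_cancel_left]
    exact (Classical.choose_spec (step n (F n).1 (F n).2)).1
  obtain ⟨b, hb⟩ := hcomp (i + 1 + 1) (fun n => (F n).1) hF2
  refine ⟨b, sub_eq_zero.mp (hsep (i + 1) _ fun n => ?_)⟩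
  have e : c - D (i + 1) b = (c - D (i + 1) (F n).1) - D (i + 1) (b - (F n).1) := by
    rw [map_sub]; abel
  rw [e]
  exact sub_mem (F n).2 (hGd n (i + 1) _ (hb n))

/-- The (shifted) mapping cone differential. -/
def coneD {R : Type u} [Ring R] {X Y : ℤ → Type u}
    [∀ i, AddCommGroup (X i)] [∀ i, Module R (X i)]
    [∀ i, AddCommGroup (Y i)] [∀ i, Module R (Y i)]
    (dX : ∀ i : ℤ, X (i + 1) →ₗ[R] X i) (dY : ∀ i : ℤ, Y (i + 1) →ₗ[R] Y i)
    (f : ∀ i : ℤ, X i →ₗ[R] Y i) (i : ℤ) :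
    (Y (i + 1 + 1) × X (i + 1)) →ₗ[R] (Y (i + 1) × X i) :=
  LinearMap.prod
    ((dY (i + 1)).comp (LinearMap.fst R (Y (i + 1 + 1)) (X (i + 1))) +
      (f (i + 1)).comp (LinearMap.snd R (Y (i + 1 + 1)) (X (i + 1))))
    (-((dX i).comp (LinearMap.snd R (Y (i + 1 + 1)) (X (i + 1)))))

theorem coneD_apply {R : Type u} [Ring R] {X Y : ℤ → Type u}
    [∀ i, AddCommGroup (X i)] [∀ i, Module R (X i)]
    [∀ i, AddCommGroup (Y i)] [∀ i, Module R (Y i)]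
    (dX : ∀ i : ℤ, X (i + 1) →ₗ[R] X i) (dY : ∀ i : ℤ, Y (i + 1) →ₗ[R] Y i)
    (f : ∀ i : ℤ, X i →ₗ[R] Y i) (i : ℤ) (c : Y (i + 1 + 1) × X (i + 1)) :
    coneD dX dY f i c = (dY (i + 1) c.1 + f (i + 1) c.2, -(dX i c.2)) := rfl




/-- Comparison theorem for complete filtered chain complexes: a filtration-preserving chain map
between complexes equipped with complete decreasing filtrations `(F_n)_{n ∈ ℕ}` (with `F_0`
everything) which is a quasi-isomorphism on all associated graded complexes `F_n/F_{n+1}`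
is itself a quasi-isomorphism.

Complexes are ℤ-indexed with differentials `dX i : X (i+1) → X i` squaring to zero;
completeness states that each degree is separated (`⋂ₙ Fₙ = 0`) and complete (every compatible
sequence of cosets comes from an element), i.e. `X i ≅ lim_n X i / F_n X i`. A quasi-isomorphism
is a chain map inducing a bijection on homology in every degree, expressed elementarily below. -/
theorem quasiIso_of_graded_quasiIso_of_complete
    (R : Type u) [Ring R]
    (X Y : ℤ → Type u)
    [∀ i, AddCommGroup (X i)] [∀ i, Module R (X i)]
    [∀ i, AddCommGroup (Y i)] [∀ i, Module R (Y i)]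
    (dX : ∀ i : ℤ, X (i + 1) →ₗ[R] X i) (dY : ∀ i : ℤ, Y (i + 1) →ₗ[R] Y i)
    (hdX : ∀ (i : ℤ) (x : X (i + 1 + 1)), dX i (dX (i + 1) x) = 0)
    (hdY : ∀ (i : ℤ) (y : Y (i + 1 + 1)), dY i (dY (i + 1) y) = 0)
    (f : ∀ i : ℤ, X i →ₗ[R] Y i)
    (hf : ∀ (i : ℤ) (x : X (i + 1)), f i (dX i x) = dY i (f (i + 1) x))
    (FX : ℕ → ∀ i : ℤ, Submodule R (X i)) (FY : ℕ → ∀ i : ℤ, Submodule R (Y i))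
    -- `F_0` is everything
    (hFX0 : ∀ i, FX 0 i = ⊤) (hFY0 : ∀ i, FY 0 i = ⊤)
    -- the filtration is decreasing
    (hFXmono : ∀ n i, FX (n + 1) i ≤ FX n i) (hFYmono : ∀ n i, FY (n + 1) i ≤ FY n i)
    -- each `F_n` is a subcomplex
    (hFXd : ∀ (n : ℕ) (i : ℤ) (x : X (i + 1)), x ∈ FX n (i + 1) → dX i x ∈ FX n i)
    (hFYd : ∀ (n : ℕ) (i : ℤ) (y : Y (i + 1)), y ∈ FY n (i + 1) → dY i y ∈ FY n i)
    -- completeness of the filtration on `X`: `X i → lim_n X i / F_n X i` is injective and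
    -- surjective
    (hXsep : ∀ (i : ℤ) (x : X i), (∀ n, x ∈ FX n i) → x = 0)
    (hXcomplete : ∀ (i : ℤ) (a : ℕ → X i), (∀ n, a (n + 1) - a n ∈ FX n i) →
      ∃ x : X i, ∀ n, x - a n ∈ FX n i)
    -- completeness of the filtration on `Y`
    (hYsep : ∀ (i : ℤ) (y : Y i), (∀ n, y ∈ FY n i) → y = 0)
    (hYcomplete : ∀ (i : ℤ) (a : ℕ → Y i), (∀ n, a (n + 1) - a n ∈ FY n i) →
      ∃ y : Y i, ∀ n, y - a n ∈ FY n i)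
    -- `f` preserves the filtrations
    (hffilt : ∀ (n : ℕ) (i : ℤ) (x : X i), x ∈ FX n i → f i x ∈ FY n i)
    -- `f` induces a quasi-isomorphism on every associated graded complex `F_n/F_{n+1}`:
    -- surjectivity on graded homology
    (hgrsurj : ∀ (n : ℕ) (i : ℤ) (y : Y (i + 1)), y ∈ FY n (i + 1) → dY i y ∈ FY (n + 1) i →
      ∃ x : X (i + 1), x ∈ FX n (i + 1) ∧ dX i x ∈ FX (n + 1) i ∧
        ∃ y' ∈ FY (n + 1) (i + 1), ∃ z ∈ FY n (i + 1 + 1),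
          y - f (i + 1) x = y' + dY (i + 1) z)
    -- and injectivity on graded homology
    (hgrinj : ∀ (n : ℕ) (i : ℤ) (x : X (i + 1)), x ∈ FX n (i + 1) → dX i x ∈ FX (n + 1) i →
      (∃ y' ∈ FY (n + 1) (i + 1), ∃ z ∈ FY n (i + 1 + 1),
        f (i + 1) x = y' + dY (i + 1) z) →
      ∃ x' ∈ FX (n + 1) (i + 1), ∃ w ∈ FX n (i + 1 + 1), x = x' + dX (i + 1) w) :
    -- conclusion: `f` is a quasi-isomorphism
    ∀ i : ℤ,
      (∀ y : Y (i + 1), dY i y = 0 →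
        ∃ x : X (i + 1), dX i x = 0 ∧ ∃ z : Y (i + 1 + 1), y - f (i + 1) x = dY (i + 1) z) ∧
      (∀ x : X (i + 1), dX i x = 0 → (∃ z : Y (i + 1 + 1), f (i + 1) x = dY (i + 1) z) →
        ∃ w : X (i + 1 + 1), x = dX (i + 1) w) := by
  -- abbreviations
  have key := aux_acyclic (R := R) (fun k => Y (k + 1) × X k) (coneD dX dY f)
    (by
      intro k c
      rw [coneD_apply, coneD_apply]
      refine Prod.ext ?_ ?_
      · show dY (k + 1) (dY (k + 1 + 1) c.1 + f (k + 1 + 1) c.2) +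
          f (k + 1) (-(dX (k + 1) c.2)) = 0
        rw [map_add, hdY, map_neg, hf (k + 1) c.2]
        abel
      · show -(dX k (-(dX (k + 1) c.2))) = 0
        rw [map_neg, hdX, neg_zero, neg_zero])
    (fun n k => (FY n (k + 1)).prod (FX n k))
    (by
      intro k
      show (FY 0 (k + 1)).prod (FX 0 k) = ⊤
      rw [hFY0, hFX0]; exact Submodule.prod_top)
    (by
      intro n k c hc
      rw [coneD_apply]
      obtain ⟨h1, h2⟩ := Submodule.mem_prod.mp hc
      exact Submodule.mem_prod.mpr
        ⟨add_mem (hFYd n (k + 1) _ h1) (hffilt n (k + 1) _ h2),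
          neg_mem (hFXd n k _ h2)⟩)
    (by
      intro k c h
      have h1 := fun n => (Submodule.mem_prod.mp (h n)).1
      have h2 := fun n => (Submodule.mem_prod.mp (h n)).2
      exact Prod.ext (hYsep (k + 1) c.1 h1) (hXsep k c.2 h2))
    (by
      intro k a ha
      obtain ⟨y0, hy0⟩ := hYcomplete (k + 1) (fun n => (a n).1)
        (fun n => (Submodule.mem_prod.mp (ha n)).1)
      obtain ⟨x0, hx0⟩ := hXcomplete k (fun n => (a n).2)
        (fun n => (Submodule.mem_prod.mp (ha n)).2)
      exact ⟨(y0, x0), fun n => Submodule.mem_prod.mpr ⟨hy0 n, hx0 n⟩⟩)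
    (by
      -- graded acyclicity of the cone
      intro n k c hc h0
      obtain ⟨hy, hx⟩ := Submodule.mem_prod.mp hc
      have h1 : dY (k + 1) c.1 + f (k + 1) c.2 = 0 := congrArg Prod.fst h0
      have h2 : dX k c.2 = 0 := neg_eq_zero.mp (congrArg Prod.snd h0)
      have hfx : f (k + 1) c.2 = 0 + dY (k + 1) (-c.1) := by
        rw [map_neg, zero_add]
        exact eq_neg_of_add_eq_zero_right h1
      obtain ⟨x₁, hx₁, w₀, hw₀, hxeq⟩ := hgrinj n k c.2 hx
        (by rw [h2]; exact zero_mem _) ⟨0, zero_mem _, -c.1, neg_mem hy, hfx⟩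
      -- hxeq : c.2 = x₁ + dX (k + 1) w₀
      have hymem : c.1 + f (k + 1 + 1) w₀ ∈ FY n (k + 1 + 1) :=
        add_mem hy (hffilt n (k + 1 + 1) w₀ hw₀)
      have hdy : dY (k + 1) (c.1 + f (k + 1 + 1) w₀) ∈ FY (n + 1) (k + 1) := by
        have e : dY (k + 1) (c.1 + f (k + 1 + 1) w₀) = -(f (k + 1) x₁) := by
          rw [map_add, ← hf (k + 1) w₀]
          have e2 : dX (k + 1) w₀ = c.2 - x₁ := by rw [hxeq, add_sub_cancel_left]
          rw [e2, map_sub, ← add_sub_assoc, h1, zero_sub]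
        rw [e]
        exact neg_mem (hffilt (n + 1) (k + 1) x₁ hx₁)
      obtain ⟨ξ, hξ, hdξ, y₂, hy₂, z₂, hz₂, heq2⟩ :=
        hgrsurj n (k + 1) (c.1 + f (k + 1 + 1) w₀) hymem hdy
      -- heq2 : (c.1 + f w₀) - f ξ = y₂ + dY z₂
      refine ⟨(y₂, x₁ + dX (k + 1) ξ),
        Submodule.mem_prod.mpr ⟨hy₂, add_mem hx₁ hdξ⟩,
        (z₂, ξ - w₀),
        Submodule.mem_prod.mpr ⟨hz₂, sub_mem hξ hw₀⟩, ?_⟩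
      rw [coneD_apply]
      refine Prod.ext ?_ ?_
      · show c.1 = y₂ + (dY (k + 1 + 1) z₂ + f (k + 1 + 1) (ξ - w₀))
        rw [map_sub, ← add_assoc, ← heq2]
        abel
      · show c.2 = (x₁ + dX (k + 1) ξ) + -(dX (k + 1) (ξ - w₀))
        rw [map_sub, hxeq]
        abel)
  intro i
  obtain ⟨j, rfl⟩ : ∃ j : ℤ, i = j + 1 := ⟨i - 1, by omega⟩
  constructor
  · intro y hy
    obtain ⟨w, hw⟩ := key j (y, (0 : X (j + 1)))
      (by
        rw [coneD_apply]
        refine Prod.ext ?_ ?_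
        · show dY (j + 1) y + f (j + 1) 0 = 0
          rw [hy, map_zero, add_zero]
        · show -(dX j 0) = 0
          rw [map_zero, neg_zero])
    rw [coneD_apply] at hw
    refine ⟨w.2, ?_, w.1, ?_⟩
    · have := congrArg Prod.snd hw
      simp only at this
      -- this : 0 = -(dX (j+1) w.2)
      have : (0 : X (j + 1)) = -(dX (j + 1) w.2) := this
      rw [eq_comm, neg_eq_zero] at this
      exact this
    · have h1 : y = dY (j + 1 + 1) w.1 + f (j + 1 + 1) w.2 := congrArg Prod.fst hw
      rw [h1]; abel
  · intro x hx ⟨z, hz⟩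
    obtain ⟨w, hw⟩ := key (j + 1) (z, -x)
      (by
        rw [coneD_apply]
        refine Prod.ext ?_ ?_
        · show dY (j + 1 + 1) z + f (j + 1 + 1) (-x) = 0
          rw [map_neg, ← hz, add_neg_cancel]
        · show -(dX (j + 1) (-x)) = 0
          rw [map_neg, hx, neg_zero, neg_zero])
    rw [coneD_apply] at hw
    refine ⟨w.2, ?_⟩
    have h2 : -x = -(dX (j + 1 + 1) w.2) := congrArg Prod.snd hw
    exact neg_injective h2
end

section
/- Let R be a commutative ring and (A, 𝒜, d) a differential graded R-algebra: A is an associative unital R-algebra with a ℤ-grading by R-submodules 𝒜(n) (so A is the internal direct sum of the 𝒜(n), 1 ∈ 𝒜(0), and 𝒜(m)·𝒜(n) ⊆ 𝒜(m+n)), and d : A → A is an R-linear map with d(𝒜(n)) ⊆ 𝒜(n−1), d ∘ d = 0, and d(ab) = d(a)b + (−1)^m a d(b) for all a ∈ 𝒜(m) and b ∈ A. Let t ∈ R, m, n ∈ ℤ, let y₁ ∈ 𝒜(m) and y₂ ∈ 𝒜(n) with d(y₁) = 0 and d(y₂) = 0, and let z₁ ∈ 𝒜(m+1) and z₂ ∈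 𝒜(n+1) with d(z₁) = t·y₁ and d(z₂) = −t·y₂. Then the element w = z₁y₂ + (−1)^m y₁z₂, which lies in 𝒜(m+n+1), is a cycle: d(w) = 0. -/
universe u v

/-- In a differential graded `R`-algebra, given cycles `y₁ ∈ 𝒜 m`, `y₂ ∈ 𝒜 n` and elements
`z₁ ∈ 𝒜 (m+1)`, `z₂ ∈ 𝒜 (n+1)` with `d z₁ = t • y₁` and `d z₂ = −(t • y₂)`, the torsion
Massey product representative `w = z₁y₂ + (−1)^m y₁z₂` lies in `𝒜 (m+n+1)` and is a cycle. -/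
theorem torsion_massey_representative_is_cycle
    (R : Type u) [CommRing R] (A : Type v) [Ring A] [Algebra R A]
    (𝒜 : ℤ → Submodule R A) [GradedAlgebra 𝒜]
    (d : A →ₗ[R] A)
    (hd_deg : ∀ (k : ℤ), ∀ a ∈ 𝒜 k, d a ∈ 𝒜 (k - 1))
    (hd2 : ∀ a : A, d (d a) = 0)
    (hleibniz : ∀ (k : ℤ), ∀ a ∈ 𝒜 k, ∀ b : A,
      d (a * b) = d a * b + (((-1 : ℤˣ) ^ k : ℤˣ) : ℤ) • (a * d b))
    (t : R) (m n : ℤ)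
    (y₁ : A) (hy₁ : y₁ ∈ 𝒜 m) (y₂ : A) (hy₂ : y₂ ∈ 𝒜 n)
    (hdy₁ : d y₁ = 0) (hdy₂ : d y₂ = 0)
    (z₁ : A) (hz₁ : z₁ ∈ 𝒜 (m + 1)) (z₂ : A) (hz₂ : z₂ ∈ 𝒜 (n + 1))
    (hdz₁ : d z₁ = t • y₁) (hdz₂ : d z₂ = -(t • y₂)) :
    z₁ * y₂ + (((-1 : ℤˣ) ^ m : ℤˣ) : ℤ) • (y₁ * z₂) ∈ 𝒜 (m + n + 1) ∧
      d (z₁ * y₂ + (((-1 : ℤˣ) ^ m : ℤˣ) : ℤ) • (y₁ * z₂)) = 0 := by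
  constructor
  · apply Submodule.add_mem
    · have := SetLike.mul_mem_graded hz₁ hy₂
      rwa [show m + 1 + n = m + n + 1 by ring] at this
    · apply zsmul_mem
      have := SetLike.mul_mem_graded hy₁ hz₂
      rwa [show m + (n + 1) = m + n + 1 by ring] at this
  · rw [map_add, map_zsmul, hleibniz _ z₁ hz₁ y₂, hleibniz _ y₁ hy₁ z₂,
      hdy₁, hdy₂, hdz₁, hdz₂]
    simp only [mul_zero, zero_mul, smul_zero, add_zero, zero_add, mul_neg, mul_smul_comm,
      smul_neg, smul_smul, ← Units.val_mul, Int.units_mul_self, Units.val_one, one_smul,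
      smul_mul_assoc, add_neg_cancel]
end

section
/- Let R be a commutative ring and (A, 𝒜, d) a differential graded R-algebra: A is an associative unital R-algebra with a ℤ-grading by R-submodules 𝒜(n) (so A is the internal direct sum of the 𝒜(n), 1 ∈ 𝒜(0), and 𝒜(m)·𝒜(n) ⊆ 𝒜(m+n)), and d : A → A is an R-linear map with d(𝒜(n)) ⊆ 𝒜(n−1), d ∘ d = 0, and d(ab) = d(a)b + (−1)^m a d(b) for all a ∈ 𝒜(m) and b ∈ A. Let t ∈ R, m, n ∈ ℤ, and let y₁ ∈ 𝒜(m), y₂ ∈ 𝒜(n) be cycles (d(y₁) = 0 = d(y₂)). Suppose given z₁ ∈ 𝒜(m+1), z₂ ∈ 𝒜(n+1) with d(z₁) = t·y₁, d(z₂) = −t·y₂, and also u₁ ∈ 𝒜(m+1), u₂ ∈ 𝒜(n+1) together with z₁' ∈ 𝒜(m+1), z₂' ∈ 𝒜(n+1) satisfying d(z₁') = t·(y₁ + d(u₁)) and d(z₂') = −t·(y₂ + d(u₂)). Set w = z₁y₂ + (−1)^m y₁z₂ and w' = z₁'(y₂ + d(u₂)) + (−1)^m (y₁ + d(u₁))z₂'.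 Then there exist cycles c₁ ∈ 𝒜(m+1) and c₂ ∈ 𝒜(n+1) (d(c₁) = 0 = d(c₂)) and an element b ∈ 𝒜(m+n+2) such that w' − w = c₁·y₂ + y₁·c₂ + d(b). Consequently, the homology class of the torsion Massey representative is well defined modulo the indeterminacy x₁·H_{n+1}(A) + H_{m+1}(A)·x₂. -/
universe u v

/-- Well-definedness of the binary torsion Massey product: changing the representing cycles
`y₁, y₂` by boundaries and choosing new bounding elements `z₁', z₂'` changes the representative
`w = z₁y₂ + (−1)^m y₁z₂` by an element of the form `c₁·y₂ + y₁·c₂ + d(b)` with `c₁, c₂` cycles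
of degrees `m+1`, `n+1`. -/
theorem torsion_massey_representative_well_defined
    (R : Type u) [CommRing R] (A : Type v) [Ring A] [Algebra R A]
    (𝒜 : ℤ → Submodule R A) [GradedAlgebra 𝒜]
    (d : A →ₗ[R] A)
    (hd_deg : ∀ (k : ℤ), ∀ a ∈ 𝒜 k, d a ∈ 𝒜 (k - 1))
    (hd2 : ∀ a : A, d (d a) = 0)
    (hleibniz : ∀ (k : ℤ), ∀ a ∈ 𝒜 k, ∀ b : A,
      d (a * b) = d a * b + (((-1 : ℤˣ) ^ k : ℤˣ) : ℤ) • (a * d b))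
    (t : R) (m n : ℤ)
    (y₁ : A) (hy₁ : y₁ ∈ 𝒜 m) (y₂ : A) (hy₂ : y₂ ∈ 𝒜 n)
    (hdy₁ : d y₁ = 0) (hdy₂ : d y₂ = 0)
    (z₁ : A) (hz₁ : z₁ ∈ 𝒜 (m + 1)) (z₂ : A) (hz₂ : z₂ ∈ 𝒜 (n + 1))
    (hdz₁ : d z₁ = t • y₁) (hdz₂ : d z₂ = -(t • y₂))
    (u₁ : A) (hu₁ : u₁ ∈ 𝒜 (m + 1)) (u₂ : A) (hu₂ : u₂ ∈ 𝒜 (n + 1))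
    (z₁' : A) (hz₁' : z₁' ∈ 𝒜 (m + 1)) (z₂' : A) (hz₂' : z₂' ∈ 𝒜 (n + 1))
    (hdz₁' : d z₁' = t • (y₁ + d u₁)) (hdz₂' : d z₂' = -(t • (y₂ + d u₂))) :
    ∃ c₁ ∈ 𝒜 (m + 1), ∃ c₂ ∈ 𝒜 (n + 1), d c₁ = 0 ∧ d c₂ = 0 ∧
      ∃ b ∈ 𝒜 (m + n + 2),
        (z₁' * (y₂ + d u₂) + (((-1 : ℤˣ) ^ m : ℤˣ) : ℤ) • ((y₁ + d u₁) * z₂'))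
          - (z₁ * y₂ + (((-1 : ℤˣ) ^ m : ℤˣ) : ℤ) • (y₁ * z₂))
          = c₁ * y₂ + y₁ * c₂ + d b := by
  set ε : ℤ := (((-1 : ℤˣ) ^ m : ℤˣ) : ℤ) with hε_def
  have hεu : ((-1 : ℤˣ) ^ m) * ((-1 : ℤˣ) ^ m) = 1 := by
    rw [← mul_zpow]; norm_num
  have hε2 : ε * ε = 1 := by
    rw [hε_def, ← Units.val_mul, hεu]; rfl
  have hεm1 : (((-1 : ℤˣ) ^ (m + 1) : ℤˣ) : ℤ) = -ε := by
    rw [zpow_add_one]; push_cast; ring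
  refine ⟨z₁' - z₁ - t • u₁, ?_, ε • (z₂' - z₂ + t • u₂), ?_, ?_, ?_,
      ε • (u₁ * z₂' - z₁' * u₂ + t • (u₁ * u₂)), ?_, ?_⟩
  · exact sub_mem (sub_mem hz₁' hz₁) (Submodule.smul_mem _ t hu₁)
  · exact zsmul_mem (add_mem (sub_mem hz₂' hz₂) (Submodule.smul_mem _ t hu₂)) ε
  · simp only [map_sub, map_smul, hdz₁', hdz₁]
    module
  · simp only [map_zsmul, map_smul, map_add, map_sub, hdz₂', hdz₂]
    module
  · have h1 : u₁ * z₂' ∈ 𝒜 (m + n + 2) := by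
      have := SetLike.mul_mem_graded hu₁ hz₂'
      rwa [show m + 1 + (n + 1) = m + n + 2 by ring] at this
    have h2 : z₁' * u₂ ∈ 𝒜 (m + n + 2) := by
      have := SetLike.mul_mem_graded hz₁' hu₂
      rwa [show m + 1 + (n + 1) = m + n + 2 by ring] at this
    have h3 : u₁ * u₂ ∈ 𝒜 (m + n + 2) := by
      have := SetLike.mul_mem_graded hu₁ hu₂
      rwa [show m + 1 + (n + 1) = m + n + 2 by ring] at this
    exact zsmul_mem (add_mem (sub_mem h1 h2) (Submodule.smul_mem _ t h3)) ε
  · have l1 := hleibniz (m + 1) u₁ hu₁ z₂'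
    have l2 := hleibniz (m + 1) z₁' hz₁' u₂
    have l3 := hleibniz (m + 1) u₁ hu₁ u₂
    rw [hεm1] at l1 l2 l3
    simp only [map_zsmul, map_smul, map_add, map_sub, l1, l2, l3, hdz₁', hdz₂', hd2]
    simp only [mul_add, add_mul, mul_sub, sub_mul, smul_add, smul_sub, smul_smul,
      mul_smul_comm, smul_mul_assoc, mul_neg, neg_mul, smul_neg, neg_smul, mul_zero, smul_zero]
    have hεR : ((ε : R)) ^ 2 = 1 := by
      rw [sq, ← Int.cast_mul, hε2, Int.cast_one]
    match_scalars <;> ring_nf <;> (try simp only [hεR]) <;> ring_nf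
end
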